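/- Let σ > 0, θ ∈ [0,1], and x, y ∈ ℝ². Then e^{σ|x|} · e^{σ|y|} − e^{σ|x+y|} ≤ (2σ · min(|x|,|y|))^θ · e^{σ|x|} · e^{σ|y|}, where for a vector v = (v₁,v₂) ∈ ℝ² the notation |v| denotes the ℓ¹ norm |v₁| + |v₂|. -/
import Mathlib

/-- ℓ¹ norm on ℝ². -/
noncomputable def l1norm (v : ℝ × ℝ) : ℝ := |v.1| + |v.2|

theorem exp_l1_sub_le (σ θ : ℝ) (hσ : 0 < σ) (hθ : θ ∈ Set.Icc (0:ℝ) 1) (x y : ℝ × ℝ) :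
    Real.exp (σ * l1norm x) * Real.exp (σ * l1norm y) - Real.exp (σ * l1norm (x + y)) ≤
      (2 * σ * min (l1norm x) (l1norm y)) ^ θ *
        (Real.exp (σ * l1norm x) * Real.exp (σ * l1norm y)) := by
  obtain ⟨hθ0, hθ1⟩ := hθ
  set a := l1norm x with ha
  set b := l1norm y with hb
  set c := l1norm (x + y) with hc
  -- triangle-type inequalities
  have habs1 : |x.1| ≤ |x.1 + y.1| + |y.1| := by
    have h := abs_add_le (x.1 + y.1) (-y.1)
    rw [abs_neg] at h
    have e : x.1 + y.1 + -y.1 = x.1 := by ring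
    rw [e] at h; exact h
  have habs2 : |x.2| ≤ |x.2 + y.2| + |y.2| := by
    have h := abs_add_le (x.2 + y.2) (-y.2)
    rw [abs_neg] at h
    have e : x.2 + y.2 + -y.2 = x.2 := by ring
    rw [e] at h; exact h
  have habs3 : |y.1| ≤ |x.1 + y.1| + |x.1| := by
    have h := abs_add_le (x.1 + y.1) (-x.1)
    rw [abs_neg] at h
    have e : x.1 + y.1 + -x.1 = y.1 := by ring
    rw [e] at h; exact h
  have habs4 : |y.2| ≤ |x.2 + y.2| + |x.2| := by
    have h := abs_add_le (x.2 + y.2) (-x.2)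
    rw [abs_neg] at h
    have e : x.2 + y.2 + -x.2 = y.2 := by ring
    rw [e] at h; exact h
  have hcab : a + b - c ≤ 2 * min a b := by
    rcases min_cases a b with ⟨hm, hab⟩ | ⟨hm, hab⟩ <;> rw [hm] <;>
      [ (have : b ≤ c + a := by
          simp only [ha, hb, hc, l1norm, Prod.fst_add, Prod.snd_add]; linarith);
        (have : a ≤ c + b := by
          simp only [ha, hb, hc, l1norm, Prod.fst_add, Prod.snd_add]; linarith) ] <;>
      linarith
  have ht0 : 0 ≤ σ * (a + b - c) := by
    have hca : c ≤ a + b := by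
      simp only [ha, hb, hc, l1norm, Prod.fst_add, Prod.snd_add]
      have h1 := abs_add_le x.1 y.1
      have h2 := abs_add_le x.2 y.2
      linarith
    nlinarith
  set t := σ * (a + b - c) with htdef
  set s := 2 * σ * min a b with hsdef
  have hts : t ≤ s := by
    rw [htdef, hsdef]; nlinarith
  have hs0 : 0 ≤ s := le_trans ht0 hts
  have key : 1 - Real.exp (-t) ≤ s ^ θ := by
    have h1 : 1 - Real.exp (-t) ≤ min s 1 := by
      rcases le_total s 1 with h | h
      · rw [min_eq_left h]
        nlinarith [Real.add_one_le_exp (-t)]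
      · rw [min_eq_right h]
        nlinarith [Real.exp_pos (-t)]
    refine h1.trans ?_
    rcases eq_or_lt_of_le hs0 with h0 | h0
    · rw [← h0]; simp
      positivity
    · rcases le_total s 1 with h | h
      · rw [min_eq_left h]
        calc s = s ^ (1:ℝ) := (Real.rpow_one s).symm
          _ ≤ s ^ θ := Real.rpow_le_rpow_of_exponent_ge h0 h hθ1
      · rw [min_eq_right h]
        exact Real.one_le_rpow h hθ0
  have hexp : Real.exp (σ * c) = Real.exp (σ * a) * Real.exp (σ * b) * Real.exp (-t) := by
    rw [← Real.exp_add, ← Real.exp_add]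
    congr 1
    rw [htdef]; ring
  have hE : 0 < Real.exp (σ * a) * Real.exp (σ * b) := by positivity
  rw [hexp]
  nlinarith [key, hE, Real.exp_pos (-t)]
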